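/- Multiplication by a function commutes with the prederivative up to a derivative term: for f of class B^r on ℝⁿ and v ∈ ℝⁿ, the commutator satisfies [m_f, P_v] = m_{L_v f} as operators on differential chains, i.e. m_f ∘ P_v − P_v ∘ m_f = m_{L_v f}. -/

import Mathlib

noncomputable section

open Finsupp Filter

variable {E W : Type*} [NormedAddCommGroup E] [NormedSpace ℝ E]
  [NormedAddCommGroup W] [NormedSpace ℝ W]

/-- Translation of a Dirac chain through the vector `u`. -/
def transl (u : E) (A : E →₀ W) : E →₀ W := Finsupp.mapDomain (· + u) A

/-- The difference operator `Δ_u = T_u - I`. -/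
def del (u : E) (A : E →₀ W) : E →₀ W := transl u A - A

/-- Iterated difference chain along a list of vectors. -/
def diff : List E → (E →₀ W) → (E →₀ W)
  | [], A => A
  | u :: σ, A => del u (diff σ A)

/-- The product of the norms of the vectors in the list `σ`. -/
def lnorm (σ : List E) : ℝ := (σ.map norm).prod

/-- Costs of representations of `A` as sums of `j`-difference chains with `j ≤ r`. -/
def reps (r : ℕ) (A : E →₀ W) : Set ℝ :=
  {c | ∃ (m : ℕ) (σ : Fin m → List E) (p : Fin m → E) (α : Fin m → W),
      (∀ i, (σ i).length ≤ r) ∧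
      A = ∑ i, diff (σ i) (Finsupp.single (p i) (α i)) ∧
      c = ∑ i, lnorm (σ i) * ‖α i‖}

/-- The `B^r` norm of a Dirac chain. -/
def Bnorm (r : ℕ) (A : E →₀ W) : ℝ := sInf (reps r A)

/-- `M` is a `B^r`-bound for the cochain (differential form) `ω`. -/
def IsFormBound (r : ℕ) (ω : (E →₀ W) →ₗ[ℝ] ℝ) (M : ℝ) : Prop :=
  ∀ (σ : List E) (p : E) (α : W), σ.length ≤ r →
    |ω (diff σ (Finsupp.single p α))| ≤ M * lnorm σ * ‖α‖

/-- The `B^r` norm of a differential form. -/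
def formNorm (r : ℕ) (ω : (E →₀ W) →ₗ[ℝ] ℝ) : ℝ :=
  sInf {M | 0 ≤ M ∧ IsFormBound r ω M}

open Topology

/-- Multiplication of a Dirac chain by a function: `m_f(p;α) = (p; f(p)·α)`. -/
def mulFn (f : E → ℝ) (A : E →₀ W) : E →₀ W :=
  A.sum fun p α => Finsupp.single p (f p • α)

/-- Iterated translation-difference of a function along a list of vectors. -/
def fdiff : List E → (E → ℝ) → E → ℝ
  | [], f => f
  | u :: σ, f => fun p => fdiff σ f (p + u) - fdiff σ f p

/-- `M` is a `B^r`-bound for the function (`0`-form) `f`. -/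
def IsFnBound (r : ℕ) (f : E → ℝ) (M : ℝ) : Prop :=
  ∀ (σ : List E) (p : E), σ.length ≤ r → |fdiff σ f p| ≤ M * lnorm σ

/-!
On a single Dirac chain `(p;α)` the commutator of `m_f` with the difference quotient
`t⁻¹ Δ_{tv}` is the single chain `(p + tv; t⁻¹(f(p + tv) - f(p)) α)`, and since Dirac chains
depend continuously on their point and mass in every `B^r` norm with `r ≥ 1`, this converges
to `(p; L_v f(p) α)`. Both sides of the identity are linear in the chain, hence agree on all
Dirac chains, and by continuity on their completion.
-/

section Chains

omit [NormedSpace ℝ E] [NormedSpace ℝ W]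

lemma del_single (u p : E) (α : W) : del u (single p α) = single (p + u) α - single p α := by
  simp [del, transl, mapDomain_single]

lemma lnorm_nonneg (σ : List E) : 0 ≤ lnorm σ :=
  List.prod_nonneg fun _ ha => by
    obtain ⟨u, -, rfl⟩ := List.mem_map.mp ha
    exact norm_nonneg u

lemma bddBelow_reps (r : ℕ) (A : E →₀ W) : BddBelow (reps r A) := by
  refine ⟨0, fun c ⟨m, σ, p, α, _, _, hc⟩ => ?_⟩
  rw [hc]
  exact Finset.sum_nonneg fun i _ => mul_nonneg (lnorm_nonneg _) (norm_nonneg _)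

lemma Bnorm_diff_single_le {r : ℕ} {σ : List E} (hσ : σ.length ≤ r) (p : E) (α : W) :
    Bnorm r (diff σ (single p α)) ≤ lnorm σ * ‖α‖ :=
  csInf_le (bddBelow_reps _ _) ⟨1, fun _ => σ, fun _ => p, fun _ => α, fun _ => hσ, by simp,
    by simp⟩

end Chains

section MulFn

omit [NormedAddCommGroup E] [NormedSpace ℝ E]

variable (f : E → ℝ)

lemma mulFn_single (p : E) (α : W) : mulFn f (single p α) = single p (f p • α) := by
  simp [mulFn]

lemma mulFn_add (A B : E →₀ W) : mulFn f (A + B) = mulFn f A + mulFn f B := by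
  classical
  exact sum_add_index' (by simp) fun p α β => by rw [smul_add, single_add]

lemma mulFn_sub (A B : E →₀ W) : mulFn f (A - B) = mulFn f A - mulFn f B := by
  rw [eq_sub_iff_add_eq, ← mulFn_add, sub_add_cancel]

lemma mulFn_smul (c : ℝ) (A : E →₀ W) : mulFn f (c • A) = c • mulFn f A := by
  rw [mulFn, sum_smul_index' (by simp), mulFn, smul_sum]
  exact sum_congr fun p _ => by rw [smul_single, smul_comm]

end MulFn

section DiracContinuity

omit [NormedSpace ℝ E]

variable {Y : Type*} [SeminormedAddCommGroup Y] [Module ℝ Y] {r : ℕ} (ι : (E →₀ W) →ₗ[ℝ] Y)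

lemma norm_map_single_sub_map_single_le (hι : ∀ A, ‖ι A‖ ≤ Bnorm r A) (hr : 1 ≤ r)
    (p q : E) (α β : W) :
    ‖ι (single q β) - ι (single p α)‖ ≤ ‖q - p‖ * ‖β‖ + ‖β - α‖ := by
  have hsplit : single q β - single p α =
      diff [q - p] (single p β) + diff [] (single p (β - α)) := by
    simp only [diff, del_single, add_sub_cancel, single_sub]
    abel
  have hdel := Bnorm_diff_single_le (r := r) (σ := [q - p]) (by simpa using hr) p β
  have hdirac := Bnorm_diff_single_le (r := r) (σ := []) (Nat.zero_le r) p (β - α)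
  simp only [lnorm, List.map_cons, List.map_nil, List.prod_cons, List.prod_nil, mul_one,
    one_mul] at hdel hdirac
  rw [← map_sub, hsplit, map_add]
  exact (norm_add_le _ _).trans (add_le_add ((hι _).trans hdel) ((hι _).trans hdirac))

lemma continuous_map_single (hι : ∀ A, ‖ι A‖ ≤ Bnorm r A) (hr : 1 ≤ r) :
    Continuous fun x : E × W => ι (single x.1 x.2) := by
  refine continuous_iff_continuousAt.mpr fun ⟨p, α⟩ => ?_
  rw [ContinuousAt, tendsto_iff_norm_sub_tendsto_zero]
  refine squeeze_zero (fun _ => norm_nonneg _)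
    (fun x => norm_map_single_sub_map_single_le ι hι hr p x.1 α x.2) ?_
  exact (by fun_prop : Continuous fun x : E × W => ‖x.1 - p‖ * ‖x.2‖ + ‖x.2 - α‖).tendsto'
    (p, α) 0 (by simp)

end DiracContinuity

omit [NormedSpace ℝ E] in
lemma mulFn_del_single_sub_del_mulFn_single (f : E → ℝ) (u p : E) (α : W) :
    mulFn f (del u (single p α)) - del u (mulFn f (single p α)) =
      single (p + u) ((f (p + u) - f p) • α) := by
  simp only [del_single, mulFn_sub, mulFn_single, sub_smul, single_sub]
  abel

lemma tendsto_commutator_mulFn_del_single {Y : Type*} [SeminormedAddCommGroup Y] [Module ℝ Y]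
    {r : ℕ} (ι : (E →₀ W) →ₗ[ℝ] Y) (hι : ∀ A, ‖ι A‖ ≤ Bnorm r A) (hr : 1 ≤ r)
    {f : E → ℝ} {f' : E →L[ℝ] ℝ} {p : E} (hf : HasFDerivAt f f' p) (v : E) (α : W) :
    Tendsto (fun t : ℝ => ι (mulFn f (t⁻¹ • del (t • v) (single p α))) -
        ι (t⁻¹ • del (t • v) (mulFn f (single p α))))
      (𝓝[≠] 0) (𝓝 (ι (single p (f' v • α)))) := by
  have hpoint : Tendsto (fun t : ℝ => p + t • v) (𝓝[≠] 0) (𝓝 p) :=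
    tendsto_nhdsWithin_of_tendsto_nhds
      ((by fun_prop : Continuous fun t : ℝ => p + t • v).tendsto' 0 p (by simp))
  have hmass := ((hf.hasLineDerivAt v).tendsto_slope_zero).smul_const α
  refine (((continuous_map_single ι hι hr).tendsto _).comp (hpoint.prodMk_nhds hmass)).congr
    fun t => ?_
  simp only [Function.comp_apply, smul_eq_mul, ← map_sub, mulFn_smul, ← smul_sub,
    mulFn_del_single_sub_del_mulFn_single, smul_single, smul_smul]

theorem mul_prederivative_commutator_general {n : ℕ} {W : Type*}
    [NormedAddCommGroup W] [NormedSpace ℝ W]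
    (r : ℕ) (v : EuclideanSpace ℝ (Fin n))
    (f : EuclideanSpace ℝ (Fin n) → ℝ)
    (hfd : Differentiable ℝ f)
    (X Y : Type*) [NormedAddCommGroup X] [NormedSpace ℝ X]
    [NormedAddCommGroup Y] [NormedSpace ℝ Y]
    (ιX : ((EuclideanSpace ℝ (Fin n)) →₀ W) →ₗ[ℝ] X)
    (hXd : DenseRange ιX)
    (ιY : ((EuclideanSpace ℝ (Fin n)) →₀ W) →ₗ[ℝ] Y)
    (hY : ∀ A, ‖ιY A‖ = Bnorm (r + 1) A)
    (P : X →L[ℝ] Y)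
    (hP : ∀ A : (EuclideanSpace ℝ (Fin n)) →₀ W,
      Tendsto (fun t : ℝ => ιY (t⁻¹ • del (t • v) A)) (𝓝[≠] 0) (𝓝 (P (ιX A))))
    (MfX : X →L[ℝ] X) (hMfX : ∀ A, MfX (ιX A) = ιX (mulFn f A))
    (MfY : Y →L[ℝ] Y) (hMfY : ∀ A, MfY (ιY A) = ιY (mulFn f A))
    (Mg : X →L[ℝ] Y)
    (hMg : ∀ A, Mg (ιX A) = ιY (mulFn (fun p => fderiv ℝ f p v) A)) :
    ∀ J : X, MfY (P J) - P (MfX J) = Mg J := by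
  have hsingle : ∀ p α, (MfY ∘L P - P ∘L MfX) (ιX (single p α)) = Mg (ιX (single p α)) := by
    intro p α
    have hlim := ((MfY.continuous.tendsto _).comp (hP (single p α))).sub
      (hP (mulFn f (single p α)))
    simp only [Function.comp_def, hMfY, ← hMfX] at hlim
    rw [hMg, mulFn_single]
    exact tendsto_nhds_unique hlim <| tendsto_commutator_mulFn_del_single ιY
      (fun A => (hY A).le) (Nat.le_add_left 1 r) (hfd p).hasFDerivAt v α
  have hchains : ⇑(MfY ∘L P - P ∘L MfX) ∘ ιX = Mg ∘ ιX :=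
    congrArg DFunLike.coe (Finsupp.lhom_ext (φ := (MfY ∘L P - P ∘L MfX).toLinearMap ∘ₗ ιX)
      (ψ := Mg.toLinearMap ∘ₗ ιX) hsingle)
  exact congrFun (hXd.equalizer (by fun_prop) Mg.continuous hchains)

/-- Multiplication by a function `f` of class `B^r` commutes with the
prederivative `P_v` up to a derivative term: `[m_f, P_v] = m_{L_v f}`, i.e.
`m_f ∘ P_v − P_v ∘ m_f = m_{L_v f}` as operators on differential chains (here: on the
`B^r` completion `X`, with values in the `B^{r+1}` completion `Y`). -/
theorem mul_prederivative_commutator {n : ℕ} {W : Type*}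
    [NormedAddCommGroup W] [NormedSpace ℝ W]
    (r : ℕ) (v : EuclideanSpace ℝ (Fin n))
    (f : EuclideanSpace ℝ (Fin n) → ℝ)
    (hf : ∃ M, 0 ≤ M ∧ IsFnBound r f M) (hfd : Differentiable ℝ f)
    (X Y : Type*) [NormedAddCommGroup X] [NormedSpace ℝ X]
    [NormedAddCommGroup Y] [NormedSpace ℝ Y]
    (ιX : ((EuclideanSpace ℝ (Fin n)) →₀ W) →ₗ[ℝ] X)
    (hX : ∀ A, ‖ιX A‖ = Bnorm r A) (hXd : DenseRange ιX)
    (ιY : ((EuclideanSpace ℝ (Fin n)) →₀ W) →ₗ[ℝ] Y)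
    (hY : ∀ A, ‖ιY A‖ = Bnorm (r + 1) A)
    (P : X →L[ℝ] Y)
    (hP : ∀ A : (EuclideanSpace ℝ (Fin n)) →₀ W,
      Tendsto (fun t : ℝ => ιY (t⁻¹ • del (t • v) A)) (𝓝[≠] 0) (𝓝 (P (ιX A))))
    (MfX : X →L[ℝ] X) (hMfX : ∀ A, MfX (ιX A) = ιX (mulFn f A))
    (MfY : Y →L[ℝ] Y) (hMfY : ∀ A, MfY (ιY A) = ιY (mulFn f A))
    (Mg : X →L[ℝ] Y)
    (hMg : ∀ A, Mg (ιX A) = ιY (mulFn (fun p => fderiv ℝ f p v) A)) :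
    ∀ J : X, MfY (P J) - P (MfX J) = Mg J :=
  mul_prederivative_commutator_general r v f hfd X Y ιX hXd ιY hY P hP MfX hMfX MfY hMfY Mg hMg
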